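/- For all points x, y in the open unit ball 𝔹ⁿ one has tanh(ρ(x,y)/4) ≥ |x−y| / ( 2 + 2|x||y| − (1/2)·(|x|+|y|)²/(1+|x||y|) ). -/

import Mathlib

/-!
With `P = √(1 - ‖x‖²) √(1 - ‖y‖²)`, the half-angle formula for `tanh ∘ arsinh` gives
`tanh (ρ/4) = ‖x - y‖ / (P + √(P² + ‖x - y‖²))`. Writing `c = 1 + ‖x‖‖y‖`, one has
`P² = c² - (‖x‖ + ‖y‖)²`, so `√(P² + ‖x - y‖²) ≤ c` by the triangle inequality and
`P ≤ c - (‖x‖ + ‖y‖)² / (2c)` by `√(1 - t) ≤ 1 - t/2`; the two bounds add up to the denominator.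
-/

/-- Hyperbolic distance in the open unit ball of `ℝⁿ`:
`ρ(x,y) = 2 · arsinh(|x−y| / (√(1−|x|²)·√(1−|y|²)))`. -/
noncomputable def hypDistBall {n : ℕ} (x y : EuclideanSpace ℝ (Fin n)) : ℝ :=
  2 * Real.arsinh (‖x - y‖ / (Real.sqrt (1 - ‖x‖ ^ 2) * Real.sqrt (1 - ‖y‖ ^ 2)))

open Real

theorem Real.tanh_half_arsinh (s : ℝ) : tanh (arsinh s / 2) = s / (1 + √(1 + s ^ 2)) := by
  set t := arsinh s / 2
  have hs : s = 2 * sinh t * cosh t := by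
    rw [← sinh_two_mul, mul_div_cancel₀ _ two_ne_zero, sinh_arsinh]
  have hsqrt : √(1 + s ^ 2) = cosh t ^ 2 + sinh t ^ 2 := by
    rw [← cosh_two_mul, mul_div_cancel₀ _ two_ne_zero, cosh_arsinh]
  have hcosh : 0 < cosh t := cosh_pos t
  rw [tanh_eq_sinh_div_cosh, hsqrt, hs, div_eq_div_iff hcosh.ne' (by positivity)]
  linear_combination (-sinh t) * cosh_sq_sub_sinh_sq t

theorem Real.tanh_half_arsinh_div (d : ℝ) {P : ℝ} (hP : 0 < P) :
    tanh (arsinh (d / P) / 2) = d / (P + √(P ^ 2 + d ^ 2)) := by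
  have hsqrt : √(1 + (d / P) ^ 2) = √(P ^ 2 + d ^ 2) / P := by
    rw [eq_div_iff hP.ne', ← sqrt_sq hP.le, ← sqrt_mul (by positivity), sqrt_sq hP.le]
    congr 1
    field_simp
  rw [tanh_half_arsinh, hsqrt, one_add_div hP.ne', div_div_div_cancel_right₀ hP.ne']

theorem Real.sqrt_sq_sub_sq_le {c : ℝ} (u : ℝ) (hc : 0 < c) (hu : u ^ 2 ≤ 2 * c ^ 2) :
    √(c ^ 2 - u ^ 2) ≤ c - u ^ 2 / (2 * c) := by
  have hcu : u ^ 2 / (2 * c) ≤ c := by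
    rw [div_le_iff₀ (by positivity)]
    linarith
  rw [sqrt_le_left (sub_nonneg.2 hcu), sub_sq, mul_div_assoc',
    mul_div_cancel_left₀ _ (by positivity : 2 * c ≠ 0)]
  linarith [sq_nonneg (u ^ 2 / (2 * c))]

theorem sq_sqrt_one_sub_sq_mul_sqrt_one_sub_sq {a b : ℝ} (ha : a ^ 2 ≤ 1) (hb : b ^ 2 ≤ 1) :
    (√(1 - a ^ 2) * √(1 - b ^ 2)) ^ 2 = (1 + a * b) ^ 2 - (a + b) ^ 2 := by
  rw [mul_pow, sq_sqrt (sub_nonneg.2 ha), sq_sqrt (sub_nonneg.2 hb)]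
  ring

theorem sqrt_one_sub_sq_mul_sqrt_one_sub_sq_le {a b : ℝ} (ha : 0 ≤ a) (hb : 0 ≤ b) (ha1 : a ≤ 1)
    (hb1 : b ≤ 1) : √(1 - a ^ 2) * √(1 - b ^ 2) ≤ 1 + a * b - (a + b) ^ 2 / (2 * (1 + a * b)) := by
  rw [← sqrt_sq (by positivity : 0 ≤ √(1 - a ^ 2) * √(1 - b ^ 2)),
    sq_sqrt_one_sub_sq_mul_sqrt_one_sub_sq (by nlinarith) (by nlinarith)]
  have hab : a + b ≤ 1 + a * b := by nlinarith [mul_nonneg (sub_nonneg.2 ha1) (sub_nonneg.2 hb1)]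
  exact sqrt_sq_sub_sq_le _ (by positivity) (by nlinarith [mul_nonneg ha hb])

theorem sqrt_sq_add_sq_le_one_add_mul {a b d : ℝ} (ha : a ^ 2 ≤ 1) (hb : b ^ 2 ≤ 1)
    (hd : d ^ 2 ≤ (a + b) ^ 2) : √((√(1 - a ^ 2) * √(1 - b ^ 2)) ^ 2 + d ^ 2) ≤ 1 + a * b := by
  rw [sq_sqrt_one_sub_sq_mul_sqrt_one_sub_sq ha hb, sqrt_le_iff]
  constructor <;> nlinarith

theorem tanh_quarter_hypDist_lower_bound_five {n : ℕ} (x y : EuclideanSpace ℝ (Fin n))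
    (hx : ‖x‖ < 1) (hy : ‖y‖ < 1) :
    Real.tanh (hypDistBall x y / 4) ≥
      ‖x - y‖ / (2 + 2 * ‖x‖ * ‖y‖ - (1 / 2) * (‖x‖ + ‖y‖) ^ 2 / (1 + ‖x‖ * ‖y‖)) := by
  have h0x := norm_nonneg x
  have h0y := norm_nonneg y
  set P := √(1 - ‖x‖ ^ 2) * √(1 - ‖y‖ ^ 2)
  have hP : 0 < P := mul_pos (sqrt_pos.2 (by nlinarith)) (sqrt_pos.2 (by nlinarith))
  have hdist : ‖x - y‖ ^ 2 ≤ (‖x‖ + ‖y‖) ^ 2 := pow_le_pow_left₀ (norm_nonneg _) (norm_sub_le x y) 2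
  have hden : P + √(P ^ 2 + ‖x - y‖ ^ 2) ≤
      2 + 2 * ‖x‖ * ‖y‖ - (1 / 2) * (‖x‖ + ‖y‖) ^ 2 / (1 + ‖x‖ * ‖y‖) := by
    have hP_le := sqrt_one_sub_sq_mul_sqrt_one_sub_sq_le h0x h0y hx.le hy.le
    have hsqrt_le := sqrt_sq_add_sq_le_one_add_mul (by nlinarith) (by nlinarith) hdist
    have hhalf : (1 / 2) * (‖x‖ + ‖y‖) ^ 2 / (1 + ‖x‖ * ‖y‖) =
        (‖x‖ + ‖y‖) ^ 2 / (2 * (1 + ‖x‖ * ‖y‖)) := by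
      rw [div_mul_eq_div_div, one_div_mul_eq_div, div_div]
    linarith
  have harg : hypDistBall x y / 4 = arsinh (‖x - y‖ / P) / 2 := by
    rw [hypDistBall]
    ring
  rw [harg, tanh_half_arsinh_div _ hP, ge_iff_le]
  exact div_le_div_of_nonneg_left (norm_nonneg _) (by positivity) hden
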